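/- arXiv:1311.5584 — 4 statements merged into one kernel-verified Lean document; each statement's English description precedes it below -/
import Mathlib

section
/- Let f : 𝕋³ × ℝ³ → [0,∞) be measurable with finite second moment ∫_{𝕋³×ℝ³} |ξ|² f dξ dx < ∞, and set ρ_f(x) := ∫_{ℝ³} f(x,ξ) dξ and m_f(x) := ∫_{ℝ³} ξ f(x,ξ) dξ. Let ε > 0, R > 0, define u_f^ε := m_f/(ε + ρ_f) and the truncation χ_R(w) := w if |w| ≤ R and χ_R(w) := 0 otherwise. Then ∫_{𝕋³×ℝ³} f(x,ξ) ( χ_R(u_f^ε(x)) − ξ )·ξ dξ dx ≤ ∫_{𝕋³} |m_f(x)|²/(ρ_f(x)+ε) dx − ∫_{𝕋³×ℝ³} |ξ|² f dξ dx ≤ 0. -/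
open MeasureTheory Filter Real Set
open scoped RealInnerProductSpace

/-!
Expanding `∫ ‖ξ - w‖² f(x, ξ) dξ ≥ 0` gives `2⟪w, m⟫ - ‖w‖² ρ ≤ ∫ ‖ξ‖² f dξ` for every `w`;
the choice `w = m / (ρ + ε)` turns this into `‖m‖² / (ρ + ε) ≤ ∫ ‖ξ‖² f dξ`, a form of
Cauchy–Schwarz that never divides by `ρ`. In `ξ` the drag integrand integrates to
`⟪χ_R(u), m⟫ - ∫ ‖ξ‖² f dξ`, and since `χ_R(u)` is `u` or `0`, the pairing `⟪χ_R(u), m⟫` lies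
between `0` and `‖m‖² / (ρ + ε)`. Integrating these fibrewise bounds over the torus gives both
inequalities.
-/

noncomputable section

abbrev E3 := EuclideanSpace ℝ (Fin 3)

/-- A fundamental domain of the flat torus `𝕋³ = ℝ³/ℤ³`; integrals over the torus are
integrals over this cube. -/
def cube : Set E3 := {x | ∀ i, x i ∈ Icc (0:ℝ) 1}

/-- The truncation `χ_R(w) = w` if `|w| ≤ R` and `χ_R(w) = 0` otherwise. -/
def chiR (R : ℝ) (w : E3) : E3 := if ‖w‖ ≤ R then w else 0

section Moments

variable {E : Type*} [NormedAddCommGroup E] [InnerProductSpace ℝ E]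
  [MeasurableSpace E] [BorelSpace E] [SecondCountableTopology E] {μ : Measure E} {g : E → ℝ}

theorem integrable_smul_self_of_integrable_sq_norm_mul (hg : Integrable g μ)
    (h2 : Integrable (fun ξ => ‖ξ‖ ^ 2 * g ξ) μ) : Integrable (fun ξ => g ξ • ξ) μ := by
  refine (hg.norm.add h2.norm).mono' (hg.aestronglyMeasurable.smul aestronglyMeasurable_id) ?_
  refine Eventually.of_forall fun ξ => ?_
  have hξ : ‖ξ‖ ≤ 1 + ‖ξ‖ ^ 2 := by nlinarith [norm_nonneg ξ]
  simp only [Pi.add_apply, norm_smul, norm_mul, norm_pow, norm_norm]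
  nlinarith [norm_nonneg (g ξ)]

variable [CompleteSpace E]

theorem integral_inner_sub_self_mul (hg : Integrable g μ)
    (h2 : Integrable (fun ξ => ‖ξ‖ ^ 2 * g ξ) μ) (w : E) :
    ∫ ξ, ⟪w - ξ, ξ⟫ * g ξ ∂μ = ⟪w, ∫ ξ, g ξ • ξ ∂μ⟫ - ∫ ξ, ‖ξ‖ ^ 2 * g ξ ∂μ := by
  have hv := integrable_smul_self_of_integrable_sq_norm_mul hg h2
  have hpt : ∀ ξ, ⟪w - ξ, ξ⟫ * g ξ = ⟪w, g ξ • ξ⟫ - ‖ξ‖ ^ 2 * g ξ := fun ξ => by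
    rw [inner_sub_left, real_inner_self_eq_norm_sq, real_inner_smul_right]; ring
  rw [funext hpt, integral_sub (hv.const_inner w) h2, integral_inner hv]

theorem two_inner_sub_le_integral_sq_norm_mul (hg0 : ∀ ξ, 0 ≤ g ξ) (hg : Integrable g μ)
    (h2 : Integrable (fun ξ => ‖ξ‖ ^ 2 * g ξ) μ) (w : E) :
    2 * ⟪w, ∫ ξ, g ξ • ξ ∂μ⟫ - ‖w‖ ^ 2 * ∫ ξ, g ξ ∂μ ≤ ∫ ξ, ‖ξ‖ ^ 2 * g ξ ∂μ := by
  have hv : Integrable (fun ξ => ⟪w, g ξ • ξ⟫) μ :=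
    (integrable_smul_self_of_integrable_sq_norm_mul hg h2).const_inner w
  have hpt : ∀ ξ, ‖ξ - w‖ ^ 2 * g ξ =
      ‖ξ‖ ^ 2 * g ξ - 2 * ⟪w, g ξ • ξ⟫ + ‖w‖ ^ 2 * g ξ := fun ξ => by
    rw [norm_sub_sq_real, real_inner_smul_right, real_inner_comm]; ring
  have h0 : 0 ≤ ∫ ξ, ‖ξ - w‖ ^ 2 * g ξ ∂μ :=
    integral_nonneg fun ξ => mul_nonneg (sq_nonneg _) (hg0 ξ)
  rw [funext hpt, integral_add (f := fun ξ => ‖ξ‖ ^ 2 * g ξ - 2 * ⟪w, g ξ • ξ⟫)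
    (h2.sub (hv.const_mul 2)) (hg.const_mul _), integral_sub h2 (hv.const_mul 2),
    integral_const_mul, integral_const_mul,
    integral_inner (integrable_smul_self_of_integrable_sq_norm_mul hg h2)] at h0
  linarith

theorem sq_norm_integral_smul_self_div_le (hg0 : ∀ ξ, 0 ≤ g ξ) (hg : Integrable g μ)
    (h2 : Integrable (fun ξ => ‖ξ‖ ^ 2 * g ξ) μ) {s : ℝ} (hs : 0 < s)
    (hgs : ∫ ξ, g ξ ∂μ ≤ s) :
    ‖∫ ξ, g ξ • ξ ∂μ‖ ^ 2 / s ≤ ∫ ξ, ‖ξ‖ ^ 2 * g ξ ∂μ := by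
  set v := ∫ ξ, g ξ • ξ ∂μ
  refine le_trans ?_ (two_inner_sub_le_integral_sq_norm_mul hg0 hg h2 (s⁻¹ • v))
  rw [real_inner_smul_left, real_inner_self_eq_norm_sq, norm_smul, norm_inv,
    Real.norm_of_nonneg hs.le]
  have hmass : (s⁻¹ * ‖v‖) ^ 2 * ∫ ξ, g ξ ∂μ ≤ s⁻¹ * ‖v‖ ^ 2 := calc
    _ ≤ (s⁻¹ * ‖v‖) ^ 2 * s := by gcongr
    _ = s⁻¹ * ‖v‖ ^ 2 := by field_simp
  rw [div_eq_inv_mul]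
  linarith

end Moments

theorem integral_le_integral_sub_integral_le_zero {α : Type*} [MeasurableSpace α]
    {μ : Measure α} {F φ a b : α → ℝ} (hφm : AEStronglyMeasurable φ μ)
    (ham : AEStronglyMeasurable a μ) (hb : Integrable b μ)
    (h : ∀ᵐ x ∂μ, F x = φ x - b x ∧ 0 ≤ φ x ∧ φ x ≤ a x ∧ a x ≤ b x) :
    ∫ x, F x ∂μ ≤ ∫ x, a x ∂μ - ∫ x, b x ∂μ ∧ ∫ x, a x ∂μ - ∫ x, b x ∂μ ≤ 0 := by
  have ha : Integrable a μ := integrable_of_le_of_le ham (h.mono fun x hx => hx.2.1.trans hx.2.2.1)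
    (h.mono fun x hx => hx.2.2.2) (integrable_zero _ _ _) hb
  have hφ : Integrable φ μ := integrable_of_le_of_le hφm (h.mono fun x hx => hx.2.1)
    (h.mono fun x hx => hx.2.2.1) (integrable_zero _ _ _) ha
  refine ⟨?_, sub_nonpos.2 (integral_mono_ae ha hb (h.mono fun x hx => hx.2.2.2))⟩
  rw [integral_congr_ae (h.mono fun x hx => hx.1), integral_sub hφ hb]
  linarith [integral_mono_ae hφ ha (h.mono fun x hx => hx.2.2.1)]

theorem EuclideanSpace.sum_mul_eq_inner {ι : Type*} [Fintype ι] (x y : EuclideanSpace ℝ ι) :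
    ∑ i, x i * y i = ⟪x, y⟫ := by
  simp [PiLp.inner_apply, mul_comm]

theorem integral_sum_sub_mul_mul_eq {g : E3 → ℝ} (hg : Integrable g)
    (h2 : Integrable fun ξ => ‖ξ‖ ^ 2 * g ξ) (c : E3) :
    ∫ ξ, (∑ i, (c i - ξ i) * ξ i) * g ξ = ⟪c, ∫ ξ, g ξ • ξ⟫ - ∫ ξ, ‖ξ‖ ^ 2 * g ξ := by
  simp only [← PiLp.sub_apply, EuclideanSpace.sum_mul_eq_inner]
  exact integral_inner_sub_self_mul hg h2 c

theorem measurable_chiR (R : ℝ) : Measurable (chiR R) :=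
  Measurable.ite (measurableSet_le measurable_norm measurable_const) measurable_id
    measurable_const

theorem inner_chiR_smul_mem_Icc (R : ℝ) {s : ℝ} (hs : 0 ≤ s) (v : E3) :
    ⟪chiR R (s⁻¹ • v), v⟫ ∈ Icc 0 (‖v‖ ^ 2 / s) := by
  unfold chiR
  split_ifs
  · rw [real_inner_smul_left, real_inner_self_eq_norm_sq, ← div_eq_inv_mul]
    exact ⟨by positivity, le_rfl⟩
  · rw [inner_zero_left]
    exact ⟨le_rfl, by positivity⟩

theorem truncated_drag_nonpositive_general (ε R : ℝ) (hε : 0 < ε)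
    (f : E3 → E3 → ℝ) (ρ : E3 → ℝ) (m : E3 → E3)
    (hfnn : ∀ x ξ, 0 ≤ f x ξ)
    (hρ : ∀ x, ρ x = ∫ ξ, f x ξ)
    (hm : ∀ x, m x = ∫ ξ, f x ξ • ξ)
    (hfint : Integrable (fun q : E3 × E3 => f q.1 q.2) ((volume.restrict cube).prod volume))
    (hmom2 : Integrable (fun q : E3 × E3 => ‖q.2‖ ^ 2 * f q.1 q.2)
      ((volume.restrict cube).prod volume)) :
    (∫ x in cube, ∫ ξ, (∑ i, (chiR R ((ρ x + ε)⁻¹ • m x) i - ξ i) * ξ i) * f x ξ)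
        ≤ (∫ x in cube, ‖m x‖ ^ 2 / (ρ x + ε)) - ∫ x in cube, ∫ ξ, ‖ξ‖ ^ 2 * f x ξ
      ∧ (∫ x in cube, ‖m x‖ ^ 2 / (ρ x + ε)) - (∫ x in cube, ∫ ξ, ‖ξ‖ ^ 2 * f x ξ) ≤ 0 := by
  have hρ_meas : AEMeasurable ρ (volume.restrict cube) :=
    funext hρ ▸ hfint.aestronglyMeasurable.integral_prod_right'.aemeasurable
  have hm_meas : AEMeasurable m (volume.restrict cube) := funext hm ▸
    (AEStronglyMeasurable.integral_prod_right'
      (hfint.aestronglyMeasurable.smul measurable_snd.aestronglyMeasurable)).aemeasurable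
  refine integral_le_integral_sub_integral_le_zero
    (((measurable_chiR R).comp_aemeasurable
      ((hρ_meas.add_const ε).inv.smul hm_meas)).inner hm_meas).aestronglyMeasurable
    ((hm_meas.norm.pow_const 2).div (hρ_meas.add_const ε)).aestronglyMeasurable
    hmom2.integral_prod_left ?_
  filter_upwards [hfint.prod_right_ae, hmom2.prod_right_ae] with x hf h2
  have hρε : 0 < ρ x + ε := by linarith [hρ x ▸ integral_nonneg (hfnn x)]
  have hmass : ∫ ξ, f x ξ ≤ ρ x + ε := by linarith [hρ x]
  obtain ⟨hφ0, hφa⟩ := inner_chiR_smul_mem_Icc R hρε.le (m x)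
  refine ⟨?_, hφ0, hφa, ?_⟩
  · rw [integral_sum_sub_mul_mul_eq hf h2, ← hm]
    rfl
  · simpa only [← hm] using sq_norm_integral_smul_self_div_le (hfnn x) hf h2 hρε hmass

/-- For `f : 𝕋³ × ℝ³ → [0,∞)` measurable with finite mass and second moment,
`ρ_f = ∫ f dξ`, `m_f = ∫ ξ f dξ`, `u_f^ε = m_f/(ε+ρ_f)`, one has
`∫∫ f (χ_R(u_f^ε) − ξ)·ξ dξ dx ≤ ∫ |m_f|²/(ρ_f+ε) dx − ∫∫ |ξ|² f dξ dx ≤ 0`. -/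
theorem truncated_drag_nonpositive (ε R : ℝ) (hε : 0 < ε) (hR : 0 < R)
    (f : E3 → E3 → ℝ) (ρ : E3 → ℝ) (m : E3 → E3)
    (hmeas : Measurable fun q : E3 × E3 => f q.1 q.2)
    (hfnn : ∀ x ξ, 0 ≤ f x ξ)
    (hρ : ∀ x, ρ x = ∫ ξ, f x ξ)
    (hm : ∀ x, m x = ∫ ξ, f x ξ • ξ)
    (hfint : Integrable (fun q : E3 × E3 => f q.1 q.2) ((volume.restrict cube).prod volume))
    (hmom2 : Integrable (fun q : E3 × E3 => ‖q.2‖ ^ 2 * f q.1 q.2)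
      ((volume.restrict cube).prod volume)) :
    (∫ x in cube, ∫ ξ, (∑ i, (chiR R ((ρ x + ε)⁻¹ • m x) i - ξ i) * ξ i) * f x ξ)
        ≤ (∫ x in cube, ‖m x‖ ^ 2 / (ρ x + ε)) - ∫ x in cube, ∫ ξ, ‖ξ‖ ^ 2 * f x ξ
      ∧ (∫ x in cube, ‖m x‖ ^ 2 / (ρ x + ε)) - (∫ x in cube, ∫ ξ, ‖ξ‖ ^ 2 * f x ξ) ≤ 0 :=
  truncated_drag_nonpositive_general ε R hε f ρ m hfnn hρ hm hfint hmom2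

end
end

section
/- Let f : 𝕋³ × ℝ³ → [0,∞) be measurable with unit mass ∫_{𝕋³×ℝ³} f dξ dx = 1 and finite second moment ∫_{𝕋³×ℝ³} |ξ|² f dξ dx < ∞, with ρ_f(x) := ∫_{ℝ³} f(x,ξ) dξ > 0 for a.e. x and u_f := (∫_{ℝ³} ξ f dξ)/ρ_f, and let u : 𝕋³ → ℝ³ be measurable with ∫_{𝕋³} ρ_f |u|² dx < ∞. Then (1/2) ∫∫_{𝕋³×𝕋³} ∫∫_{ℝ³×ℝ³} f(x,ξ) f(y,ξ*) |ξ − ξ*|² dξ dξ* dx dy + ∫_{𝕋³} ρ_f |u − u_f|² dx = ∫_{𝕋³×ℝ³} |u − ξ|² f dξ dx + (1/2) ∫∫_{𝕋³×𝕋³} ρ_f(x) ρ_f(y) |u_f(x) − u_f(y)|² dx dy. -/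
open MeasureTheory Filter Real Set
open scoped RealInnerProductSpace

noncomputable section

lemma split3 {α : Type*} [MeasurableSpace α] {μ : Measure α} {g1 g2 g3 : α → ℝ}
    (h1 : Integrable g1 μ) (h2 : Integrable g2 μ) (h3 : Integrable g3 μ) :
    ∫ x, (g1 x - 2 * g2 x + g3 x) ∂μ
      = (∫ x, g1 x ∂μ) - 2 * (∫ x, g2 x ∂μ) + ∫ x, g3 x ∂μ := by
  have hA : Integrable (fun x => g1 x - 2 * g2 x) μ := h1.sub (h2.const_mul 2)
  rw [integral_add hA h3, integral_sub h1 (h2.const_mul 2), integral_const_mul]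

lemma integral_inner_left {α : Type*} [MeasurableSpace α] {μ : Measure α} {g : α → E3}
    (hg : Integrable g μ) (c : E3) :
    (∫ x, ⟪g x, c⟫ ∂μ) = ⟪∫ x, g x ∂μ, c⟫ := by
  have h1 : (∫ x, ⟪g x, c⟫ ∂μ) = ∫ x, ⟪c, g x⟫ ∂μ :=
    integral_congr_ae (ae_of_all _ fun x => (real_inner_comm (g x) c).symm)
  rw [h1, integral_inner hg c, real_inner_comm]

lemma expand_int {g : E3 → ℝ} (hg : Integrable g)
    (hg2 : Integrable fun ξ => ‖ξ‖ ^ 2 * g ξ)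
    (hgv : Integrable fun ξ => g ξ • ξ) (c : E3) :
    ∫ ξ, ‖c - ξ‖ ^ 2 * g ξ
      = (∫ ξ, g ξ) * ‖c‖ ^ 2 - 2 * ⟪c, ∫ ξ, g ξ • ξ⟫ + ∫ ξ, ‖ξ‖ ^ 2 * g ξ := by
  have h1 : Integrable fun ξ => ‖c‖ ^ 2 * g ξ := hg.const_mul _
  have h2 : Integrable fun ξ => ⟪c, g ξ • ξ⟫ := hgv.const_inner c
  have he : ∀ ξ, ‖c - ξ‖ ^ 2 * g ξ
      = ‖c‖ ^ 2 * g ξ - 2 * ⟪c, g ξ • ξ⟫ + ‖ξ‖ ^ 2 * g ξ := by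
    intro ξ
    rw [norm_sub_sq_real, real_inner_smul_right]; ring
  rw [integral_congr_ae (ae_of_all _ he), split3 h1 h2 hg2, integral_const_mul,
    integral_inner hgv, mul_comm]

lemma expand_int2 {g : E3 → ℝ} (hg : Integrable g)
    (hg2 : Integrable fun ξ => ‖ξ‖ ^ 2 * g ξ)
    (hgv : Integrable fun ξ => g ξ • ξ) (a b : ℝ) (c : E3) :
    ∫ ξ, g ξ * (a * ‖ξ‖ ^ 2 - 2 * ⟪ξ, c⟫ + b)
      = a * (∫ ξ, ‖ξ‖ ^ 2 * g ξ) - 2 * ⟪∫ ξ, g ξ • ξ, c⟫ + b * ∫ ξ, g ξ := by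
  have h2 : Integrable fun ξ => ⟪g ξ • ξ, c⟫ := hgv.inner_const c
  have he : ∀ ξ, g ξ * (a * ‖ξ‖ ^ 2 - 2 * ⟪ξ, c⟫ + b)
      = a * (‖ξ‖ ^ 2 * g ξ) - 2 * ⟪g ξ • ξ, c⟫ + b * g ξ := by
    intro ξ; rw [real_inner_smul_left]; ring
  rw [integral_congr_ae (ae_of_all _ he),
    split3 (hg2.const_mul a) h2 (hg.const_mul b), integral_const_mul, integral_const_mul,
    integral_inner_left hgv]

lemma m_bound {g : E3 → ℝ} (hgnn : ∀ ξ, 0 ≤ g ξ) (hg : Integrable g)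
    (hg2 : Integrable fun ξ => ‖ξ‖ ^ 2 * g ξ) (hgv : Integrable fun ξ => g ξ • ξ)
    (a : ℝ) (ha : 0 ≤ a) :
    a * ‖∫ ξ, g ξ • ξ‖ ≤ (a ^ 2 * ∫ ξ, g ξ) / 2 + (∫ ξ, ‖ξ‖ ^ 2 * g ξ) / 2 := by
  have hgn : Integrable fun ξ => g ξ * ‖ξ‖ := by
    refine hgv.norm.congr (ae_of_all _ fun ξ => ?_)
    show ‖g ξ • ξ‖ = g ξ * ‖ξ‖
    rw [norm_smul, Real.norm_of_nonneg (hgnn ξ)]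
  have h1 : ‖∫ ξ, g ξ • ξ‖ ≤ ∫ ξ, g ξ * ‖ξ‖ := by
    refine (norm_integral_le_integral_norm _).trans_eq ?_
    refine integral_congr_ae (ae_of_all _ fun ξ => ?_)
    show ‖g ξ • ξ‖ = g ξ * ‖ξ‖
    rw [norm_smul, Real.norm_of_nonneg (hgnn ξ)]
  have h2 : ∫ ξ, a * (g ξ * ‖ξ‖) ≤ ∫ ξ, (a ^ 2 * g ξ / 2 + ‖ξ‖ ^ 2 * g ξ / 2) := by
    refine integral_mono (hgn.const_mul a) (((hg.const_mul _).div_const 2).add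
      (hg2.div_const 2)) fun ξ => ?_
    have := hgnn ξ
    nlinarith [sq_nonneg (a - ‖ξ‖), norm_nonneg ξ, mul_nonneg (sq_nonneg (a - ‖ξ‖)) this]
  calc a * ‖∫ ξ, g ξ • ξ‖ ≤ a * ∫ ξ, g ξ * ‖ξ‖ := mul_le_mul_of_nonneg_left h1 ha
    _ = ∫ ξ, a * (g ξ * ‖ξ‖) := (integral_const_mul _ _).symm
    _ ≤ ∫ ξ, (a ^ 2 * g ξ / 2 + ‖ξ‖ ^ 2 * g ξ / 2) := h2
    _ = (a ^ 2 * ∫ ξ, g ξ) / 2 + (∫ ξ, ‖ξ‖ ^ 2 * g ξ) / 2 := by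
        rw [integral_add ((hg.const_mul _).div_const 2) (hg2.div_const 2)]
        simp_rw [div_eq_mul_inv, integral_mul_const, integral_const_mul]


/-- **Dissipation identity.** For `f : 𝕋³ × ℝ³ → [0,∞)` measurable with unit mass and finite
second moment, `ρ_f = ∫ f dξ > 0` a.e., `u_f = (∫ ξ f dξ)/ρ_f`, and `u : 𝕋³ → ℝ³` measurable
with `∫ ρ_f |u|² dx < ∞`:
`(1/2) ∬∬ f(x,ξ) f(y,ξ*) |ξ−ξ*|² + ∫ ρ_f |u−u_f|²
   = ∫∫ |u−ξ|² f + (1/2) ∬ ρ_f(x) ρ_f(y) |u_f(x)−u_f(y)|²`. -/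
theorem dissipation_identity
    (f : E3 → E3 → ℝ) (ρ : E3 → ℝ) (uf : E3 → E3) (u : E3 → E3)
    (hmeas : Measurable fun q : E3 × E3 => f q.1 q.2)
    (hfnn : ∀ x ξ, 0 ≤ f x ξ)
    (hρ : ∀ x, ρ x = ∫ ξ, f x ξ)
    (hρpos : ∀ᵐ x ∂(volume.restrict cube), 0 < ρ x)
    (huf : ∀ x, ρ x • uf x = ∫ ξ, f x ξ • ξ)
    (hmass : ∫ x in cube, ∫ ξ, f x ξ = 1)
    (hfint : Integrable (fun q : E3 × E3 => f q.1 q.2) ((volume.restrict cube).prod volume))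
    (hmom2 : Integrable (fun q : E3 × E3 => ‖q.2‖ ^ 2 * f q.1 q.2)
      ((volume.restrict cube).prod volume))
    (humeas : Measurable u)
    (huρ : Integrable (fun x => ρ x * ‖u x‖ ^ 2) (volume.restrict cube)) :
    (1/2) * (∫ x in cube, ∫ y in cube, ∫ ξ, ∫ η, f x ξ * f y η * ‖ξ - η‖ ^ 2)
      + (∫ x in cube, ρ x * ‖u x - uf x‖ ^ 2)
    = (∫ x in cube, ∫ ξ, ‖u x - ξ‖ ^ 2 * f x ξ)
      + (1/2) * ∫ x in cube, ∫ y in cube, ρ x * ρ y * ‖uf x - uf y‖ ^ 2 := by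
  set μ : Measure E3 := volume.restrict cube with hμ
  set m : E3 → E3 := fun x => ∫ ξ, f x ξ • ξ with hm_def
  set e : E3 → ℝ := fun x => ∫ ξ, ‖ξ‖ ^ 2 * f x ξ with he_def
  have hmx : ∀ x, (∫ ξ, f x ξ • ξ) = m x := fun x => rfl
  have hex : ∀ x, (∫ ξ, ‖ξ‖ ^ 2 * f x ξ) = e x := fun x => rfl
  have hρnn : ∀ x, 0 ≤ ρ x := fun x => by
    rw [hρ x]; exact integral_nonneg (hfnn x)
  -- measurability
  have hρ_sm : StronglyMeasurable ρ := by
    have h : StronglyMeasurable fun x => ∫ ξ, f x ξ :=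
      StronglyMeasurable.integral_prod_right (f := f) hmeas.stronglyMeasurable
    have : ρ = fun x => ∫ ξ, f x ξ := funext hρ
    rw [this]; exact h
  have hm_sm : StronglyMeasurable m := by
    rw [hm_def]
    exact StronglyMeasurable.integral_prod_right (f := fun x ξ => f x ξ • ξ)
      (hmeas.smul measurable_snd).stronglyMeasurable
  have he_sm : StronglyMeasurable e := by
    rw [he_def]
    exact StronglyMeasurable.integral_prod_right (f := fun x ξ => ‖ξ‖ ^ 2 * f x ξ)
      ((measurable_snd.norm.pow_const 2).mul hmeas).stronglyMeasurable
  -- product integrability of the first-moment integrand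
  have hmv : Integrable (fun q : E3 × E3 => f q.1 q.2 • q.2) (μ.prod volume) := by
    refine (hfint.add hmom2).mono' (hmeas.smul measurable_snd).aestronglyMeasurable
      (ae_of_all _ fun q => ?_)
    have h0 := hfnn q.1 q.2
    rw [norm_smul, Real.norm_of_nonneg h0]
    have h1 : f q.1 q.2 * ‖q.2‖ ≤ f q.1 q.2 + ‖q.2‖ ^ 2 * f q.1 q.2 := by
      nlinarith [norm_nonneg q.2, sq_nonneg (1 - ‖q.2‖)]
    exact h1
  -- fiberwise integrability
  have hsec : ∀ᵐ x ∂μ, Integrable (f x) volume ∧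
      Integrable (fun ξ => ‖ξ‖ ^ 2 * f x ξ) volume ∧
      Integrable (fun ξ => f x ξ • ξ) volume := by
    filter_upwards [hfint.prod_right_ae, hmom2.prod_right_ae, hmv.prod_right_ae]
      with x h1 h2 h3
    exact ⟨h1, h2, h3⟩
  -- integrability of moments over the cube
  have hρ_int : Integrable ρ μ :=
    hfint.integral_prod_left.congr (ae_of_all _ fun x => (hρ x).symm)
  have he_int : Integrable e μ := by rw [he_def]; exact hmom2.integral_prod_left
  have hm_int : Integrable m μ := by rw [hm_def]; exact hmv.integral_prod_left
  have hρ1 : (∫ x, ρ x ∂μ) = 1 := by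
    have h : (∫ x, ρ x ∂μ) = ∫ x, (∫ ξ, f x ξ) ∂μ :=
      integral_congr_ae (ae_of_all _ hρ)
    rw [h]; exact hmass
  -- integrability of ⟪u, m⟫
  have hum_bound : ∀ᵐ x ∂μ, ‖⟪u x, m x⟫‖ ≤ (ρ x * ‖u x‖ ^ 2 + e x) / 2 := by
    filter_upwards [hsec] with x hx
    have h1 : ‖⟪u x, m x⟫‖ ≤ ‖u x‖ * ‖m x‖ := norm_inner_le_norm _ _
    have h2 := m_bound (hfnn x) hx.1 hx.2.1 hx.2.2 ‖u x‖ (norm_nonneg _)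
    rw [hmx x, hex x, ← hρ x] at h2
    calc ‖⟪u x, m x⟫‖ ≤ ‖u x‖ * ‖m x‖ := h1
      _ ≤ (‖u x‖ ^ 2 * ρ x) / 2 + e x / 2 := h2
      _ = (ρ x * ‖u x‖ ^ 2 + e x) / 2 := by ring
  have hB_int : Integrable (fun x => ⟪u x, m x⟫) μ := by
    refine ((huρ.add he_int).div_const 2).mono'
      ((humeas.inner hm_sm.measurable).aestronglyMeasurable) ?_
    filter_upwards [hum_bound] with x hx
    exact hx
  -- facts about ρ‖uf‖²
  have hCfacts : ∀ᵐ x ∂μ, ρ x * ‖uf x‖ ^ 2 = (ρ x)⁻¹ * ‖m x‖ ^ 2 ∧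
      ρ x * ‖uf x‖ ^ 2 ≤ e x := by
    filter_upwards [hρpos, hsec] with x hx hxi
    have hmm : ρ x • uf x = m x := huf x
    have hufx : ‖uf x‖ = (ρ x)⁻¹ * ‖m x‖ := by
      rw [← hmm, norm_smul, Real.norm_of_nonneg (le_of_lt hx)]
      field_simp
    have key : ρ x * ‖uf x‖ ^ 2 = (ρ x)⁻¹ * ‖m x‖ ^ 2 := by
      rw [hufx]; field_simp
    refine ⟨key, ?_⟩
    have h2 := m_bound (hfnn x) hxi.1 hxi.2.1 hxi.2.2 ‖uf x‖ (norm_nonneg _)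
    rw [hmx x, hex x, ← hρ x] at h2
    have h3 : ρ x * ‖uf x‖ ^ 2 = ‖uf x‖ * ‖m x‖ := by
      rw [hufx]; field_simp
    nlinarith [h2, h3]
  have hC_meas : AEStronglyMeasurable (fun x => ρ x * ‖uf x‖ ^ 2) μ := by
    refine AEStronglyMeasurable.congr
      ((hρ_sm.measurable.inv.mul
        ((hm_sm.measurable.norm).pow_const 2)).aestronglyMeasurable) ?_
    filter_upwards [hCfacts] with x hx
    exact hx.1.symm
  have hC_int : Integrable (fun x => ρ x * ‖uf x‖ ^ 2) μ := by
    refine he_int.mono' hC_meas ?_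
    filter_upwards [hCfacts] with x hx
    rw [Real.norm_of_nonneg (mul_nonneg (hρnn x) (sq_nonneg _))]
    exact hx.2
  -- Term 2 : ∫ ρ ‖u - uf‖²
  have hT2 : (∫ x, ρ x * ‖u x - uf x‖ ^ 2 ∂μ)
      = (∫ x, ρ x * ‖u x‖ ^ 2 ∂μ) - 2 * (∫ x, ⟪u x, m x⟫ ∂μ)
        + ∫ x, ρ x * ‖uf x‖ ^ 2 ∂μ := by
    have hpt : ∀ x, ρ x * ‖u x - uf x‖ ^ 2
        = ρ x * ‖u x‖ ^ 2 - 2 * ⟪u x, m x⟫ + ρ x * ‖uf x‖ ^ 2 := by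
      intro x
      have hmm : ρ x • uf x = m x := huf x
      rw [norm_sub_sq_real, ← hmm, real_inner_smul_right]; ring
    rw [integral_congr_ae (ae_of_all _ hpt)]
    exact split3 huρ hB_int hC_int
  -- Term 3 : ∫∫ ‖u - ξ‖² f
  have hT3 : (∫ x, (∫ ξ, ‖u x - ξ‖ ^ 2 * f x ξ) ∂μ)
      = (∫ x, ρ x * ‖u x‖ ^ 2 ∂μ) - 2 * (∫ x, ⟪u x, m x⟫ ∂μ) + ∫ x, e x ∂μ := by
    have hae : ∀ᵐ x ∂μ, (∫ ξ, ‖u x - ξ‖ ^ 2 * f x ξ)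
        = ρ x * ‖u x‖ ^ 2 - 2 * ⟪u x, m x⟫ + e x := by
      filter_upwards [hsec] with x hx
      rw [expand_int hx.1 hx.2.1 hx.2.2 (u x), hmx x, hex x, ← hρ x]
    rw [integral_congr_ae hae]
    exact split3 huρ hB_int he_int
  -- Term 4 : double integral of ρρ‖uf x - uf y‖²
  have hT4 : (∫ x, ∫ y, ρ x * ρ y * ‖uf x - uf y‖ ^ 2 ∂μ ∂μ)
      = 2 * (∫ x, ρ x * ‖uf x‖ ^ 2 ∂μ) - 2 * ‖∫ x, m x ∂μ‖ ^ 2 := by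
    have hpt : ∀ x y, ρ x * ρ y * ‖uf x - uf y‖ ^ 2
        = (ρ x * ‖uf x‖ ^ 2) * ρ y - 2 * ⟪m x, m y⟫ + ρ x * (ρ y * ‖uf y‖ ^ 2) := by
      intro x y
      have hmmx : ρ x • uf x = m x := huf x
      have hmmy : ρ y • uf y = m y := huf y
      rw [norm_sub_sq_real, ← hmmx, ← hmmy, real_inner_smul_left, real_inner_smul_right]
      ring
    have hinner : ∀ x, (∫ y, ρ x * ρ y * ‖uf x - uf y‖ ^ 2 ∂μ)
        = ρ x * ‖uf x‖ ^ 2 - 2 * ⟪m x, ∫ y, m y ∂μ⟫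
          + ρ x * ∫ y, ρ y * ‖uf y‖ ^ 2 ∂μ := by
      intro x
      rw [integral_congr_ae (ae_of_all _ (hpt x)),
        split3 (hρ_int.const_mul _) (hm_int.const_inner (m x)) (hC_int.const_mul _),
        integral_const_mul, hρ1, mul_one, integral_inner hm_int (m x), integral_const_mul]
    rw [integral_congr_ae (ae_of_all _ hinner),
      split3 hC_int (hm_int.inner_const _) (hρ_int.mul_const _),
      integral_inner_left hm_int, integral_mul_const, hρ1, one_mul,
      real_inner_self_eq_norm_sq]
    ring
  -- Term 1 : quadruple integral
  have hT1 : (∫ x, (∫ y, (∫ ξ, ∫ η, f x ξ * f y η * ‖ξ - η‖ ^ 2) ∂μ) ∂μ)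
      = 2 * (∫ x, e x ∂μ) - 2 * ‖∫ x, m x ∂μ‖ ^ 2 := by
    have hx_ae : ∀ᵐ x ∂μ, (∫ y, (∫ ξ, ∫ η, f x ξ * f y η * ‖ξ - η‖ ^ 2) ∂μ)
        = e x - 2 * ⟪m x, ∫ y, m y ∂μ⟫ + ρ x * ∫ y, e y ∂μ := by
      filter_upwards [hsec] with x hx
      have hy_ae : ∀ᵐ y ∂μ, (∫ ξ, ∫ η, f x ξ * f y η * ‖ξ - η‖ ^ 2)
          = ρ y * e x - 2 * ⟪m x, m y⟫ + e y * ρ x := by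
        filter_upwards [hsec] with y hy
        have hinner : ∀ ξ, (∫ η, f x ξ * f y η * ‖ξ - η‖ ^ 2)
            = f x ξ * (ρ y * ‖ξ‖ ^ 2 - 2 * ⟪ξ, m y⟫ + e y) := by
          intro ξ
          have h1 : (∫ η, f x ξ * f y η * ‖ξ - η‖ ^ 2)
              = ∫ η, f x ξ * (‖ξ - η‖ ^ 2 * f y η) :=
            integral_congr_ae (ae_of_all _ fun η => by ring)
          rw [h1, integral_const_mul, expand_int hy.1 hy.2.1 hy.2.2 ξ, hmx y, hex y,
            ← hρ y]
        rw [integral_congr_ae (ae_of_all _ hinner),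
          expand_int2 hx.1 hx.2.1 hx.2.2 (ρ y) (e y) (m y), hmx x, hex x, ← hρ x]
      rw [integral_congr_ae hy_ae,
        split3 (hρ_int.mul_const _) (hm_int.const_inner (m x)) (he_int.mul_const _),
        integral_mul_const, hρ1, one_mul, integral_inner hm_int (m x),
        integral_mul_const]
      try ring
    calc (∫ x, (∫ y, (∫ ξ, ∫ η, f x ξ * f y η * ‖ξ - η‖ ^ 2) ∂μ) ∂μ)
        = ∫ x, (e x - 2 * ⟪m x, ∫ y, m y ∂μ⟫ + ρ x * ∫ y, e y ∂μ) ∂μ :=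
          integral_congr_ae hx_ae
      _ = (∫ x, e x ∂μ) - 2 * (∫ x, ⟪m x, ∫ y, m y ∂μ⟫ ∂μ)
            + ∫ x, ρ x * ∫ y, e y ∂μ ∂μ :=
          split3 he_int (hm_int.inner_const _) (hρ_int.mul_const _)
      _ = 2 * (∫ x, e x ∂μ) - 2 * ‖∫ x, m x ∂μ‖ ^ 2 := by
          rw [integral_inner_left hm_int, integral_mul_const, hρ1, one_mul,
            real_inner_self_eq_norm_sq]
          ring
  linear_combination (1/2 : ℝ) * hT1 + hT2 - hT3 - (1/2 : ℝ) * hT4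
end
end

section
/- For all real numbers a > 0 and b > 0, the relative pressure P(b,a) := b log b − a log a + (a − b)(1 + log a) satisfies P(b,a) ≥ (1/2) · min(1/a, 1/b) · (b − a)². -/
/-!
`P(b,a)` is the Bregman divergence of `x ↦ x log x` between `b` and `a`. Since the second
derivative `1/x` of this function is at least `1/max(a,b)` on `[0, max(a,b)]`, it is
`(max a b)⁻¹`-strongly convex there, and the Bregman divergence of an `m`-strongly convex
function is at least `m/2 · (b - a)²`.
-/

open Set Real

namespace ConvexOn

variable {S : Set ℝ} {f : ℝ → ℝ} {f' x y : ℝ}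

theorem add_deriv_mul_le (hfc : ConvexOn ℝ S f) (hx : x ∈ S) (hy : y ∈ S)
    (hf : HasDerivAt f f' x) : f x + f' * (y - x) ≤ f y := by
  rcases lt_trichotomy x y with hxy | rfl | hyx
  · have hslope := hfc.le_slope_of_hasDerivAt hx hy hxy hf
    rw [slope_def_field, le_div_iff₀ (sub_pos.mpr hxy)] at hslope
    linarith
  · simp
  · have hslope := hfc.slope_le_of_hasDerivAt hy hx hyx hf
    rw [slope_def_field, div_le_iff₀ (sub_pos.mpr hyx)] at hslope
    linarith

end ConvexOn

theorem StrongConvexOn.add_deriv_mul_add_sq_le {S : Set ℝ} {f : ℝ → ℝ} {m f' x y : ℝ}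
    (hfc : StrongConvexOn S m f) (hx : x ∈ S) (hy : y ∈ S) (hf : HasDerivAt f f' x) :
    f x + f' * (y - x) + m / 2 * (y - x) ^ 2 ≤ f y := by
  rw [strongConvexOn_iff_convex] at hfc
  simp only [Real.norm_eq_abs, sq_abs] at hfc
  have hg : HasDerivAt (fun t ↦ f t - m / 2 * t ^ 2) (f' - m * x) x :=
    (hf.fun_sub ((hasDerivAt_pow 2 x).const_mul (m / 2))).congr_deriv (by ring)
  have htangent := hfc.add_deriv_mul_le hx hy hg
  linarith

theorem Real.strongConvexOn_mul_log {M : ℝ} :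
    StrongConvexOn (Icc 0 M) M⁻¹ (fun x ↦ x * log x) := by
  rw [strongConvexOn_iff_convex]
  simp only [Real.norm_eq_abs, sq_abs]
  refine convexOn_of_hasDerivWithinAt2_nonneg (convex_Icc 0 M) (f' := fun x ↦ log x + 1 - M⁻¹ * x)
    (f'' := fun x ↦ x⁻¹ - M⁻¹) (by fun_prop) (fun x hx ↦ ?_) (fun x hx ↦ ?_) (fun x hx ↦ ?_)
  all_goals rw [interior_Icc] at hx
  · have := (hasDerivAt_mul_log hx.1.ne').fun_sub ((hasDerivAt_pow 2 x).const_mul (M⁻¹ / 2))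
    exact (this.congr_deriv (by ring)).hasDerivWithinAt
  · have := ((hasDerivAt_log hx.1.ne').add_const 1).fun_sub ((hasDerivAt_id x).const_mul M⁻¹)
    exact (this.congr_deriv (by ring)).hasDerivWithinAt
  · exact sub_nonneg.mpr (inv_anti₀ hx.1 hx.2.le)

/-- **Relative pressure bound.** For all `a, b > 0`, the relative pressure
`P(b,a) = b log b − a log a + (a − b)(1 + log a)` satisfies
`P(b,a) ≥ (1/2) min(1/a, 1/b) (b − a)²`. -/
theorem relative_pressure_bound (a b : ℝ) (ha : 0 < a) (hb : 0 < b) :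
    (1/2) * min (1/a) (1/b) * (b - a) ^ 2
      ≤ b * Real.log b - a * Real.log a + (a - b) * (1 + Real.log a) := by
  have hmin : min (1/a) (1/b) ≤ (max a b)⁻¹ := by
    rcases max_choice a b with h | h <;> rw [h, ← one_div]
    exacts [min_le_left _ _, min_le_right _ _]
  have hbregman := Real.strongConvexOn_mul_log.add_deriv_mul_add_sq_le
    ⟨ha.le, le_max_left a b⟩ ⟨hb.le, le_max_right a b⟩ (hasDerivAt_mul_log ha.ne')
  have hcoeff := mul_le_mul_of_nonneg_right hmin (sq_nonneg (b - a))
  linarith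
end

section
/- Let f : 𝕋³ × ℝ³ → [0,∞) be measurable with unit mass ∫_{𝕋³×ℝ³} f dξ dx = 1 and finite second moment, with ρ_f(x) := ∫_{ℝ³} f dξ > 0 a.e. and u_f := (∫_{ℝ³} ξ f dξ)/ρ_f, and let u : 𝕋³ → ℝ³ be square integrable with ∫_{𝕋³} ρ_f |u|² dx < ∞. Define u_c := ∫_{𝕋³} u dx, ξ_c := ∫_{𝕋³×ℝ³} ξ f dξ dx, E_P := (1/2)∫_{𝕋³×ℝ³}|ξ − u_f|² f dξ dx, E_U := (1/2)∫∫_{𝕋³×𝕋³}|u_f(x)−u_f(y)|² ρ_f(x)ρ_f(y) dx dy, and E_I := (1/2)|u_c − ξ_c|². Then 2E_I + 2E_P + E_U ≤ 2∫_{𝕋³×ℝ³}|u − ξ|² f dξ dx + 2∫_{𝕋³} ρ_f |u − u_c|² dx. -/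
open MeasureTheory Filter Real Set

noncomputable section

open scoped RealInnerProductSpace

lemma fiber_smul_int (g : E3 → ℝ) (hg : Measurable g) (hgnn : ∀ ξ, 0 ≤ g ξ)
    (h1 : Integrable g) (h2 : Integrable (fun ξ => ‖ξ‖ ^ 2 * g ξ)) :
    Integrable (fun ξ : E3 => g ξ • ξ) volume := by
  have hsmea : AEStronglyMeasurable (fun ξ : E3 => g ξ • ξ) volume :=
    (hg.smul measurable_id).aestronglyMeasurable
  refine (h1.add h2).mono hsmea (ae_of_all _ fun ξ => ?_)
  have h0 := hgnn ξ; have h0' := norm_nonneg ξ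
  rw [norm_smul, Real.norm_eq_abs, abs_of_nonneg h0]
  have hgoal : g ξ * ‖ξ‖ ≤ g ξ + ‖ξ‖ ^ 2 * g ξ := by
    nlinarith [mul_nonneg h0 (sq_nonneg (‖ξ‖ - 1))]
  exact hgoal.trans (le_abs_self _)

lemma fiber_calc (g : E3 → ℝ) (hg : Measurable g) (hgnn : ∀ ξ, 0 ≤ g ξ)
    (h1 : Integrable g) (h2 : Integrable (fun ξ => ‖ξ‖ ^ 2 * g ξ))
    (a b : E3) (hb : (∫ ξ, g ξ) • b = ∫ ξ, g ξ • ξ) :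
    (∫ ξ, ‖ξ - b‖ ^ 2 * g ξ) = (∫ ξ, ‖ξ‖ ^ 2 * g ξ) - (∫ ξ, g ξ) * ‖b‖ ^ 2
    ∧ (∫ ξ, ‖a - ξ‖ ^ 2 * g ξ)
      = (∫ ξ, g ξ) * ‖a - b‖ ^ 2 + ∫ ξ, ‖ξ - b‖ ^ 2 * g ξ := by
  have hsm : Integrable (fun ξ : E3 => g ξ • ξ) volume := fiber_smul_int g hg hgnn h1 h2
  have h2b : Integrable (fun ξ : E3 => ‖ξ - b‖ ^ 2 * g ξ) volume := by
    have hmb : Measurable fun ξ : E3 => ‖ξ - b‖ ^ 2 * g ξ := by fun_prop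
    refine ((h2.const_mul 2).add (h1.const_mul (2 * ‖b‖ ^ 2))).mono
      hmb.aestronglyMeasurable (ae_of_all _ fun ξ => ?_)
    have h0 := hgnn ξ
    have hb2 : ‖ξ - b‖ ^ 2 ≤ 2 * ‖ξ‖ ^ 2 + 2 * ‖b‖ ^ 2 := by
      have h3 := norm_sub_le ξ b
      have h4 := pow_le_pow_left₀ (norm_nonneg (ξ - b)) h3 2
      nlinarith [sq_nonneg (‖ξ‖ - ‖b‖)]
    rw [Real.norm_eq_abs, abs_of_nonneg (mul_nonneg (sq_nonneg _) h0)]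
    have hgoal : ‖ξ - b‖ ^ 2 * g ξ ≤ 2 * (‖ξ‖ ^ 2 * g ξ) + 2 * ‖b‖ ^ 2 * g ξ := by nlinarith
    exact hgoal.trans (le_abs_self _)
  have hinner : Integrable (fun ξ : E3 => 2 * ⟪b, g ξ • ξ⟫) volume :=
    (hsm.const_inner b).const_mul 2
  have key1 : (∫ ξ, ‖ξ - b‖ ^ 2 * g ξ) = (∫ ξ, ‖ξ‖ ^ 2 * g ξ) - (∫ ξ, g ξ) * ‖b‖ ^ 2 := by
    have hpt : ∀ ξ : E3, ‖ξ - b‖ ^ 2 * g ξ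
        = ‖ξ‖ ^ 2 * g ξ - 2 * ⟪b, g ξ • ξ⟫ + ‖b‖ ^ 2 * g ξ := by
      intro ξ
      rw [norm_sub_sq_real, real_inner_smul_right, real_inner_comm]
      ring
    have hib : (∫ ξ, ⟪b, g ξ • ξ⟫) = (∫ ξ, g ξ) * ‖b‖ ^ 2 := by
      rw [integral_inner hsm, ← hb, real_inner_smul_right, real_inner_self_eq_norm_sq]
    calc (∫ ξ, ‖ξ - b‖ ^ 2 * g ξ)
        = ∫ ξ, (‖ξ‖ ^ 2 * g ξ - 2 * ⟪b, g ξ • ξ⟫ + ‖b‖ ^ 2 * g ξ) := by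
          simp only [hpt]
      _ = (∫ ξ, ‖ξ‖ ^ 2 * g ξ) - (∫ ξ, 2 * ⟪b, g ξ • ξ⟫) + ∫ ξ, ‖b‖ ^ 2 * g ξ := by
          have hsub : Integrable (fun ξ : E3 => ‖ξ‖ ^ 2 * g ξ - 2 * ⟪b, g ξ • ξ⟫) volume :=
            h2.sub hinner
          rw [integral_add hsub (h1.const_mul _), integral_sub h2 hinner]
      _ = (∫ ξ, ‖ξ‖ ^ 2 * g ξ) - (∫ ξ, g ξ) * ‖b‖ ^ 2 := by
          rw [integral_const_mul, integral_const_mul, hib]; ring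
  refine ⟨key1, ?_⟩
  have hzero : (∫ ξ : E3, (g ξ • b - g ξ • ξ)) = 0 := by
    rw [integral_sub (h1.smul_const b) hsm, integral_smul_const, ← hb, sub_self]
  have hX : Integrable (fun ξ : E3 => g ξ • b - g ξ • ξ) volume := (h1.smul_const b).sub hsm
  have hptc : ∀ ξ : E3, ‖a - ξ‖ ^ 2 * g ξ
      = ‖a - b‖ ^ 2 * g ξ + 2 * ⟪a - b, g ξ • b - g ξ • ξ⟫ + ‖ξ - b‖ ^ 2 * g ξ := by
    intro ξ
    have h1' : a - ξ = (a - b) + (b - ξ) := by abel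
    rw [h1', norm_add_sq_real]
    have h2' : ⟪a - b, g ξ • b - g ξ • ξ⟫ = g ξ * ⟪a - b, b - ξ⟫ := by
      rw [← smul_sub, real_inner_smul_right]
    rw [h2', norm_sub_rev ξ b]
    ring
  calc (∫ ξ, ‖a - ξ‖ ^ 2 * g ξ)
      = ∫ ξ, (‖a - b‖ ^ 2 * g ξ + 2 * ⟪a - b, g ξ • b - g ξ • ξ⟫ + ‖ξ - b‖ ^ 2 * g ξ) := by
        simp only [hptc]
    _ = (∫ ξ, ‖a - b‖ ^ 2 * g ξ) + (∫ ξ, 2 * ⟪a - b, g ξ • b - g ξ • ξ⟫)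
        + ∫ ξ, ‖ξ - b‖ ^ 2 * g ξ := by
        have hc2 : Integrable (fun ξ : E3 => 2 * ⟪a - b, g ξ • b - g ξ • ξ⟫) volume :=
          (hX.const_inner _).const_mul 2
        have hadd : Integrable
            (fun ξ : E3 => ‖a - b‖ ^ 2 * g ξ + 2 * ⟪a - b, g ξ • b - g ξ • ξ⟫) volume :=
          (h1.const_mul _).add hc2
        rw [integral_add hadd h2b, integral_add (h1.const_mul _) hc2]
    _ = (∫ ξ, g ξ) * ‖a - b‖ ^ 2 + ∫ ξ, ‖ξ - b‖ ^ 2 * g ξ := by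
        rw [integral_const_mul, integral_const_mul, integral_inner hX, hzero, inner_zero_right]
        ring

set_option maxHeartbeats 1000000 in
/-- **Energy comparison.** Let `f : 𝕋³ × ℝ³ → [0,∞)` be measurable with unit mass and finite
second moment, `ρ_f = ∫ f dξ > 0` a.e., `u_f = (∫ ξ f dξ)/ρ_f`, and let `u : 𝕋³ → ℝ³` be square
integrable with `∫ ρ_f |u|² dx < ∞`.  With `u_c = ∫ u dx`, `ξ_c = ∫∫ ξ f dξ dx`,
`E_P = (1/2)∫∫|ξ−u_f|² f`, `E_U = (1/2)∬|u_f(x)−u_f(y)|² ρ_f(x)ρ_f(y)`,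
`E_I = (1/2)|u_c−ξ_c|²`:
`2E_I + 2E_P + E_U ≤ 2∫∫ |u−ξ|² f dξ dx + 2∫ ρ_f |u−u_c|² dx`. -/
theorem energy_comparison
    (f : E3 → E3 → ℝ) (ρ : E3 → ℝ) (uf : E3 → E3) (u : E3 → E3)
    (hmeas : Measurable fun q : E3 × E3 => f q.1 q.2)
    (hfnn : ∀ x ξ, 0 ≤ f x ξ)
    (hρ : ∀ x, ρ x = ∫ ξ, f x ξ)
    (hρpos : ∀ᵐ x ∂(volume.restrict cube), 0 < ρ x)
    (huf : ∀ x, ρ x • uf x = ∫ ξ, f x ξ • ξ)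
    (hmass : ∫ x in cube, ∫ ξ, f x ξ = 1)
    (hfint : Integrable (fun q : E3 × E3 => f q.1 q.2) ((volume.restrict cube).prod volume))
    (hmom2 : Integrable (fun q : E3 × E3 => ‖q.2‖ ^ 2 * f q.1 q.2)
      ((volume.restrict cube).prod volume))
    (humeas : Measurable u)
    (hu2 : Integrable (fun x => ‖u x‖ ^ 2) (volume.restrict cube))
    (huρ : Integrable (fun x => ρ x * ‖u x‖ ^ 2) (volume.restrict cube)) :
    2 * ((1/2) * ‖(∫ x in cube, u x) - ∫ x in cube, ∫ ξ, f x ξ • ξ‖ ^ 2)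
      + 2 * ((1/2) * ∫ x in cube, ∫ ξ, ‖ξ - uf x‖ ^ 2 * f x ξ)
      + (1/2) * (∫ x in cube, ∫ y in cube, ‖uf x - uf y‖ ^ 2 * (ρ x * ρ y))
    ≤ 2 * (∫ x in cube, ∫ ξ, ‖u x - ξ‖ ^ 2 * f x ξ)
      + 2 * ∫ x in cube, ρ x * ‖u x - ∫ z in cube, u z‖ ^ 2 := by
  have hρnn : ∀ x, 0 ≤ ρ x := by
    intro x; rw [hρ x]; exact integral_nonneg (hfnn x)
  have hρm : Measurable ρ := by
    have h := (hmeas.stronglyMeasurable).integral_prod_right' (ν := volume)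
    have he : ρ = fun x => ∫ ξ, f x ξ := funext hρ
    rw [he]; exact h.measurable
  set v : E3 → E3 := fun x => ∫ ξ, f x ξ • ξ with hvdef
  set w : E3 → E3 := fun x => (ρ x)⁻¹ • v x with hwdef
  set m2 : E3 → ℝ := fun x => ∫ ξ, ‖ξ‖ ^ 2 * f x ξ with hm2def
  have hvm : Measurable v := by
    have h := ((hmeas.smul (measurable_snd : Measurable fun q : E3 × E3 =>
      q.2)).stronglyMeasurable).integral_prod_right' (ν := volume)
    exact h.measurable
  have hwm : Measurable w := (hρm.inv).smul hvm
  have hm2m : Measurable m2 := by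
    have h := (((measurable_snd.norm.pow_const 2).mul
      hmeas).stronglyMeasurable).integral_prod_right' (ν := volume)
    exact h.measurable
  have hρw : ∀ x, ρ x • w x = v x := by
    intro x
    by_cases h : ρ x = 0
    · have hv0 : v x = 0 := by
        have := (huf x).symm
        rw [h, zero_smul] at this
        simpa [hvdef] using this
      rw [hwdef]
      simp [hv0]
    · rw [hwdef]
      simp only
      rw [smul_smul, mul_inv_cancel₀ h, one_smul]
  have hufw : uf =ᵐ[volume.restrict cube] w := by
    filter_upwards [hρpos] with x hx
    have h1 : ρ x • uf x = v x := huf x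
    have h2 : w x = (ρ x)⁻¹ • (ρ x • uf x) := by rw [h1, hwdef]
    rw [h2, smul_smul, inv_mul_cancel₀ hx.ne', one_smul]
  -- integrability in x
  have hρint : Integrable ρ (volume.restrict cube) := by
    have he : ρ = fun x => ∫ ξ, f x ξ := funext hρ
    rw [he]; exact hfint.integral_prod_left
  have hm2int : Integrable m2 (volume.restrict cube) := hmom2.integral_prod_left
  have hρ1 : (∫ x in cube, ρ x) = 1 := by simp only [hρ]; exact hmass
  have hfib : ∀ᵐ x ∂(volume.restrict cube),
      Integrable (fun ξ => f x ξ) volume ∧ Integrable (fun ξ => ‖ξ‖ ^ 2 * f x ξ) volume :=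
    hfint.prod_right_ae.and hmom2.prod_right_ae
  have hkey : ∀ᵐ x ∂(volume.restrict cube),
      (∫ ξ, ‖ξ - w x‖ ^ 2 * f x ξ) = m2 x - ρ x * ‖w x‖ ^ 2
      ∧ (∫ ξ, ‖u x - ξ‖ ^ 2 * f x ξ)
          = ρ x * ‖u x - w x‖ ^ 2 + ∫ ξ, ‖ξ - w x‖ ^ 2 * f x ξ
      ∧ ρ x * ‖w x‖ ^ 2 ≤ m2 x := by
    filter_upwards [hfib] with x hx
    obtain ⟨hx1, hx2⟩ := hx
    have hgm : Measurable (f x) := hmeas.comp measurable_prodMk_left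
    have hbx : (∫ ξ, f x ξ) • w x = ∫ ξ, f x ξ • ξ := by rw [← hρ x]; exact hρw x
    obtain ⟨k1, k2⟩ := fiber_calc (f x) hgm (hfnn x) hx1 hx2 (u x) (w x) hbx
    have hm2x : m2 x = ∫ ξ, ‖ξ‖ ^ 2 * f x ξ := rfl
    rw [← hρ x, ← hm2x] at k1
    rw [← hρ x] at k2
    have h0 : 0 ≤ ∫ ξ, ‖ξ - w x‖ ^ 2 * f x ξ :=
      integral_nonneg fun ξ => mul_nonneg (sq_nonneg _) (hfnn x ξ)
    exact ⟨k1, by rw [k2], by rw [k1] at h0; linarith⟩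
  have hvint : Integrable v (volume.restrict cube) := by
    refine (hρint.add hm2int).mono hvm.aestronglyMeasurable ?_
    filter_upwards [hfib] with x hx
    obtain ⟨hx1, hx2⟩ := hx
    have hgm : Measurable (f x) := hmeas.comp measurable_prodMk_left
    have hsm := fiber_smul_int (f x) hgm (hfnn x) hx1 hx2
    have hc : ‖v x‖ ≤ ρ x + m2 x := by
      calc ‖v x‖ ≤ ∫ ξ, ‖f x ξ • ξ‖ := norm_integral_le_integral_norm _
        _ ≤ ∫ ξ, (f x ξ + ‖ξ‖ ^ 2 * f x ξ) := by
            refine integral_mono hsm.norm (hx1.add hx2) fun ξ => ?_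
            have h0 := hfnn x ξ
            rw [norm_smul, Real.norm_eq_abs, abs_of_nonneg h0]
            nlinarith [mul_nonneg h0 (sq_nonneg (‖ξ‖ - 1))]
        _ = ρ x + m2 x := by rw [integral_add hx1 hx2, ← hρ x]
    exact hc.trans (le_abs_self _)
  have hρw2int : Integrable (fun x => ρ x * ‖w x‖ ^ 2) (volume.restrict cube) := by
    have hρw2m : Measurable fun x => ρ x * ‖w x‖ ^ 2 := hρm.mul (hwm.norm.pow_const 2)
    refine hm2int.mono hρw2m.aestronglyMeasurable ?_
    filter_upwards [hkey] with x hx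
    rw [Real.norm_eq_abs, abs_of_nonneg (mul_nonneg (hρnn x) (sq_nonneg _))]
    exact hx.2.2.trans (le_abs_self _)
  have quad : ∀ (a b : E3 → E3), AEStronglyMeasurable a (volume.restrict cube) →
      AEStronglyMeasurable b (volume.restrict cube) →
      Integrable (fun x => ρ x * ‖a x‖ ^ 2) (volume.restrict cube) →
      Integrable (fun x => ρ x * ‖b x‖ ^ 2) (volume.restrict cube) →
      Integrable (fun x => ρ x * ‖a x - b x‖ ^ 2) (volume.restrict cube) := by
    intro a b ham hbm hia hib
    refine ((hia.const_mul 2).add (hib.const_mul 2)).mono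
      (hρm.aestronglyMeasurable.mul (((ham.sub hbm).norm).pow 2)) (ae_of_all _ fun x => ?_)
    have h3 := norm_sub_le (a x) (b x)
    have h4 := pow_le_pow_left₀ (norm_nonneg (a x - b x)) h3 2
    rw [Real.norm_eq_abs, abs_of_nonneg (mul_nonneg (hρnn x) (sq_nonneg _))]
    have hg : ρ x * ‖a x - b x‖ ^ 2 ≤ 2 * (ρ x * ‖a x‖ ^ 2) + 2 * (ρ x * ‖b x‖ ^ 2) := by
      nlinarith [hρnn x, sq_nonneg (‖a x‖ - ‖b x‖)]
    exact hg.trans (le_abs_self _)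
  have hA : Integrable (fun x => ρ x * ‖u x - w x‖ ^ 2) (volume.restrict cube) :=
    quad u w humeas.aestronglyMeasurable hwm.aestronglyMeasurable huρ hρw2int
  -- E_P identity
  have hEP : (∫ x in cube, ∫ ξ, ‖ξ - uf x‖ ^ 2 * f x ξ)
      = (∫ x in cube, m2 x) - ∫ x in cube, ρ x * ‖w x‖ ^ 2 := by
    rw [← integral_sub hm2int hρw2int]
    refine integral_congr_ae ?_
    filter_upwards [hkey, hufw] with x hx hwx
    rw [hwx, hx.1]
  -- main kinetic identity
  have hMain : (∫ x in cube, ∫ ξ, ‖u x - ξ‖ ^ 2 * f x ξ)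
      = (∫ x in cube, ρ x * ‖u x - w x‖ ^ 2)
        + ((∫ x in cube, m2 x) - ∫ x in cube, ρ x * ‖w x‖ ^ 2) := by
    have hsub : Integrable (fun x => m2 x - ρ x * ‖w x‖ ^ 2) (volume.restrict cube) :=
      hm2int.sub hρw2int
    rw [← integral_sub hm2int hρw2int, ← integral_add hA hsub]
    refine integral_congr_ae ?_
    filter_upwards [hkey] with x hx
    rw [hx.2.1, hx.1]
  -- constant lemma
  have hconst : ∀ c : E3, (∫ x in cube, ρ x * ‖w x - c‖ ^ 2)
      = (∫ x in cube, ρ x * ‖w x‖ ^ 2) - 2 * ⟪c, ∫ x in cube, v x⟫ + ‖c‖ ^ 2 := by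
    intro c
    have hptc : ∀ x, ρ x * ‖w x - c‖ ^ 2
        = ρ x * ‖w x‖ ^ 2 - 2 * ⟪c, v x⟫ + ‖c‖ ^ 2 * ρ x := by
      intro x
      have hi : ⟪c, v x⟫ = ρ x * ⟪w x, c⟫ := by
        rw [real_inner_comm, ← hρw x, real_inner_smul_left]
      rw [norm_sub_sq_real, hi]; ring
    have hvc : Integrable (fun x => 2 * ⟪c, v x⟫) (volume.restrict cube) :=
      (hvint.const_inner c).const_mul 2
    have hsub : Integrable (fun x => ρ x * ‖w x‖ ^ 2 - 2 * ⟪c, v x⟫) (volume.restrict cube) :=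
      hρw2int.sub hvc
    calc (∫ x in cube, ρ x * ‖w x - c‖ ^ 2)
        = ∫ x in cube, (ρ x * ‖w x‖ ^ 2 - 2 * ⟪c, v x⟫ + ‖c‖ ^ 2 * ρ x) := by
          simp only [hptc]
      _ = (∫ x in cube, ρ x * ‖w x‖ ^ 2) - (∫ x in cube, 2 * ⟪c, v x⟫)
          + ∫ x in cube, ‖c‖ ^ 2 * ρ x := by
          rw [integral_add hsub (hρint.const_mul _), integral_sub hρw2int hvc]
      _ = (∫ x in cube, ρ x * ‖w x‖ ^ 2) - 2 * ⟪c, ∫ x in cube, v x⟫ + ‖c‖ ^ 2 := by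
          rw [integral_const_mul, integral_const_mul, integral_inner hvint, hρ1, mul_one]
  -- double integral identity
  have hD : (∫ x in cube, ∫ y in cube, ‖uf x - uf y‖ ^ 2 * (ρ x * ρ y))
      = 2 * (∫ x in cube, ρ x * ‖w x‖ ^ 2) - 2 * ‖∫ x in cube, v x‖ ^ 2 := by
    have step1 : (∫ x in cube, ∫ y in cube, ‖uf x - uf y‖ ^ 2 * (ρ x * ρ y))
        = ∫ x in cube, ∫ y in cube, ‖w x - w y‖ ^ 2 * (ρ x * ρ y) := by
      refine integral_congr_ae ?_
      filter_upwards [hufw] with x hx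
      refine integral_congr_ae ?_
      filter_upwards [hufw] with y hy
      rw [hx, hy]
    have step2 : ∀ x, (∫ y in cube, ‖w x - w y‖ ^ 2 * (ρ x * ρ y))
        = ρ x * (∫ x in cube, ρ x * ‖w x‖ ^ 2) - 2 * ⟪∫ x in cube, v x, v x⟫
          + ρ x * ‖w x‖ ^ 2 := by
      intro x
      have e1 : (fun y => ‖w x - w y‖ ^ 2 * (ρ x * ρ y))
          = fun y => ρ x * (ρ y * ‖w y - w x‖ ^ 2) := by
        funext y; rw [norm_sub_rev]; ring
      have hi : ⟪∫ x in cube, v x, v x⟫ = ρ x * ⟪w x, ∫ x in cube, v x⟫ := by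
        rw [real_inner_comm, ← hρw x, real_inner_smul_left]
      rw [e1, integral_const_mul, hconst (w x), hi]
      ring
    have hvc : Integrable (fun x => 2 * ⟪∫ x in cube, v x, v x⟫) (volume.restrict cube) :=
      (hvint.const_inner _).const_mul 2
    have hsub : Integrable (fun x => ρ x * (∫ x in cube, ρ x * ‖w x‖ ^ 2)
        - 2 * ⟪∫ x in cube, v x, v x⟫) (volume.restrict cube) :=
      (hρint.mul_const _).sub hvc
    calc (∫ x in cube, ∫ y in cube, ‖uf x - uf y‖ ^ 2 * (ρ x * ρ y))
        = ∫ x in cube, (ρ x * (∫ x in cube, ρ x * ‖w x‖ ^ 2)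
            - 2 * ⟪∫ x in cube, v x, v x⟫ + ρ x * ‖w x‖ ^ 2) := by
          rw [step1]; exact integral_congr_ae (ae_of_all _ fun x => step2 x)
      _ = (∫ x in cube, ρ x * (∫ x in cube, ρ x * ‖w x‖ ^ 2))
          - (∫ x in cube, 2 * ⟪∫ x in cube, v x, v x⟫)
          + ∫ x in cube, ρ x * ‖w x‖ ^ 2 := by
          rw [integral_add hsub hρw2int, integral_sub (hρint.mul_const _) hvc]
      _ = 2 * (∫ x in cube, ρ x * ‖w x‖ ^ 2) - 2 * ‖∫ x in cube, v x‖ ^ 2 := by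
          rw [integral_mul_const, hρ1, one_mul, integral_const_mul, integral_inner hvint,
            real_inner_self_eq_norm_sq]
          ring
  -- comparison inequality
  have hB : Integrable (fun x => ρ x * ‖u x - ∫ z in cube, u z‖ ^ 2) (volume.restrict cube) :=
    quad u (fun _ => ∫ z in cube, u z) humeas.aestronglyMeasurable
      aestronglyMeasurable_const huρ (hρint.mul_const _)
  have hWc : Integrable (fun x => ρ x * ‖w x - ∫ z in cube, u z‖ ^ 2) (volume.restrict cube) :=
    quad w (fun _ => ∫ z in cube, u z) hwm.aestronglyMeasurable
      aestronglyMeasurable_const hρw2int (hρint.mul_const _)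
  have hF4 : (∫ x in cube, ρ x * ‖w x - ∫ z in cube, u z‖ ^ 2)
      ≤ 2 * (∫ x in cube, ρ x * ‖u x - w x‖ ^ 2)
        + 2 * ∫ x in cube, ρ x * ‖u x - ∫ z in cube, u z‖ ^ 2 := by
    rw [← integral_const_mul 2 (fun x => ρ x * ‖u x - w x‖ ^ 2),
      ← integral_const_mul 2 (fun x => ρ x * ‖u x - ∫ z in cube, u z‖ ^ 2),
      ← integral_add ((hA.const_mul 2)) ((hB.const_mul 2))]
    refine integral_mono hWc ((hA.const_mul 2).add (hB.const_mul 2)) fun x => ?_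
    have h3 : ‖w x - ∫ z in cube, u z‖ ≤ ‖u x - w x‖ + ‖u x - ∫ z in cube, u z‖ := by
      calc ‖w x - ∫ z in cube, u z‖ = ‖(w x - u x) + (u x - ∫ z in cube, u z)‖ := by
            rw [sub_add_sub_cancel]
        _ ≤ ‖w x - u x‖ + ‖u x - ∫ z in cube, u z‖ := norm_add_le _ _
        _ = ‖u x - w x‖ + ‖u x - ∫ z in cube, u z‖ := by rw [norm_sub_rev]
    have h4 := pow_le_pow_left₀ (norm_nonneg _) h3 2
    have h5 := hρnn x
    have hg : ‖w x - ∫ z in cube, u z‖ ^ 2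
        ≤ 2 * ‖u x - w x‖ ^ 2 + 2 * ‖u x - ∫ z in cube, u z‖ ^ 2 := by
      nlinarith [sq_nonneg (‖u x - w x‖ - ‖u x - ∫ z in cube, u z‖)]
    linarith [mul_le_mul_of_nonneg_left hg h5]
  have hWM : (∫ x in cube, ρ x * ‖w x‖ ^ 2) ≤ ∫ x in cube, m2 x :=
    integral_mono_ae hρw2int hm2int (hkey.mono fun x hx => hx.2.2)
  have hcu := hconst (∫ z in cube, u z)
  have hexp : ‖(∫ x in cube, u x) - ∫ x in cube, v x‖ ^ 2
      = ‖∫ x in cube, u x‖ ^ 2 - 2 * ⟪∫ x in cube, u x, ∫ x in cube, v x⟫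
        + ‖∫ x in cube, v x‖ ^ 2 := norm_sub_sq_real _ _
  rw [hEP, hMain, hD, hexp]
  have huz : (∫ z in cube, u z) = ∫ x in cube, u x := rfl
  rw [huz] at hcu
  linarith [hF4, hcu, hWM]
end
end
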